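/- Let a = (a_i)_{i=1}^n be a sequence of positive integers, let b, k be positive integers, and suppose gcd(a_i, b) ≤ g for all i. Then the set S(a, k∘b) of integers expressible as ∑_{i∈I} a_i + jb with I ⊆ [n] and 0 ≤ j ≤ k has cardinality at least k · min(b/g, n). -/

import Mathlib

/-!
Work modulo `b`. Each `a i` has additive order `b / gcd (a i) b ≥ b / g` in `ZMod b`, and adjoining
an element `x` to a set of residues `A` either enlarges `A` or leaves it invariant under `+ x`, in
which case `A` already contains a full coset of `⟨x⟩`. Hence the subset sums of `a` hit at least
`min (b / g) (n + 1)` residues. Lifting each residue to one subset sum `s`, the integers `s + j b`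
with `j ≤ k` are pairwise distinct, which gives `k + 1` elements of `S(a, k∘b)` per residue.
-/

open Finset

section SubsetSums

variable {ι G : Type*} [DecidableEq G]

theorem min_addOrderOf_card_add_one_le_card_union_image [AddGroup G] {A : Finset G}
    (hA : A.Nonempty) (x : G) :
    min (addOrderOf x) (#A + 1) ≤ #(A ∪ A.image (x + ·)) := by
  by_cases h : A.image (x + ·) = A
  · obtain ⟨y, hy⟩ := hA
    have hmem : ∀ j : ℕ, j • x + y ∈ A := by
      intro j
      induction j with
      | zero => simpa using hy
      | succ j ih =>
        rw [succ_nsmul', add_assoc, ← h]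
        exact mem_image_of_mem _ ih
    have hinj : Set.InjOn (fun j : ℕ => j • x + y) (range (addOrderOf x)) := by
      intro i hi j hj hij
      simp only [coe_range, Set.mem_Iio] at hi hj
      exact nsmul_injOn_Iio_addOrderOf hi hj (add_right_cancel hij)
    calc min (addOrderOf x) (#A + 1) ≤ #(range (addOrderOf x)) := by simp
      _ ≤ #(A ∪ A.image (x + ·)) :=
        card_le_card_of_injOn _ (fun j _ => mem_union_left _ (hmem j)) hinj
  · have hnsub : ¬ A.image (x + ·) ⊆ A := fun hsub =>
      h (eq_of_subset_of_card_le hsub (card_image_of_injective _ (add_right_injective x)).ge)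
    obtain ⟨z, hz, hzA⟩ := not_subset.mp hnsub
    calc min (addOrderOf x) (#A + 1) ≤ #(insert z A) := by
          rw [card_insert_of_notMem hzA]; exact min_le_right _ _
      _ ≤ #(A ∪ A.image (x + ·)) :=
        card_le_card (insert_subset (mem_union_right _ hz) subset_union_left)

variable [AddCommGroup G]

def subsetSums (a : ι → G) (s : Finset ι) : Finset G :=
  s.powerset.image fun I => ∑ i ∈ I, a i

theorem subsetSums_nonempty (a : ι → G) (s : Finset ι) : (subsetSums a s).Nonempty :=
  (powerset_nonempty s).image _

variable [DecidableEq ι]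

theorem subsetSums_insert (a : ι → G) {s : Finset ι} {x : ι} (hx : x ∉ s) :
    subsetSums a (insert x s) = subsetSums a s ∪ (subsetSums a s).image (a x + ·) := by
  rw [subsetSums, powerset_insert, image_union, image_image, subsetSums, image_image]
  congr 1
  refine image_congr fun I hI => ?_
  have hxI : x ∉ I := fun hxI => hx (mem_powerset.mp hI hxI)
  simp [Function.comp, sum_insert hxI]

theorem min_card_add_one_le_card_subsetSums (a : ι → G) {c : ℕ} (s : Finset ι)
    (hc : ∀ i ∈ s, c ≤ addOrderOf (a i)) :
    min c (#s + 1) ≤ #(subsetSums a s) := by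
  induction s using Finset.induction_on with
  | empty => simp [subsetSums]
  | insert x s hx ih =>
    have hstep := min_addOrderOf_card_add_one_le_card_union_image (subsetSums_nonempty a s) (a x)
    have hcx := hc x (mem_insert_self x s)
    have hcs := ih fun i hi => hc i (mem_insert_of_mem hi)
    rw [subsetSums_insert a hx, card_insert_of_notMem hx]
    omega

end SubsetSums

theorem div_le_addOrderOf_natCast {a b g : ℕ} (hb : b ≠ 0) (hg : a.gcd b ≤ g) :
    (b : ℝ) / g ≤ addOrderOf (a : ZMod b) := by
  have hpos : 0 < b.gcd a := Nat.gcd_pos_of_pos_left _ (Nat.pos_of_ne_zero hb)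
  rw [ZMod.addOrderOf_coe a hb, Nat.cast_div (Nat.gcd_dvd_left b a) (by positivity)]
  exact div_le_div_of_nonneg_left (by positivity) (by exact_mod_cast hpos)
    (by exact_mod_cast Nat.gcd_comm b a ▸ hg)

theorem card_image_natCast_mul_le_card_image_add_mul {ι : Type*} [DecidableEq ι] (f : ι → ℕ)
    (s : Finset ι) {b : ℕ} (hb : b ≠ 0) (k : ℕ) :
    #(s.image fun i => (f i : ZMod b)) * k ≤
      #((s ×ˢ range k).image fun p => f p.1 + p.2 * b) := by
  obtain ⟨t, hts, hinj, himage⟩ := exists_subset_injOn_image_eq_of_surjOn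
    (f := fun i => (f i : ZMod b)) (s : Set ι) (s.image fun i => (f i : ZMod b))
    (by rw [coe_image]; exact Set.surjOn_image _ _)
  have hshift : Set.InjOn (fun p : ι × ℕ => f p.1 + p.2 * b) (t ×ˢ range k : Finset _) := by
    rintro ⟨i, j⟩ hij ⟨i', j'⟩ hij' heq
    simp only [coe_product, Set.mem_prod, mem_coe] at hij hij' heq
    have hres : (f i : ZMod b) = f i' := by
      simpa using congrArg (fun m : ℕ => (m : ZMod b)) heq
    obtain rfl := hinj hij.1 hij'.1 hres
    simp [Nat.mul_right_cancel_iff (Nat.pos_of_ne_zero hb)] at heq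
    simp [heq]
  calc #(s.image fun i => (f i : ZMod b)) * k = #(t ×ˢ range k) := by
        rw [← himage, card_image_of_injOn hinj, card_product, card_range]
    _ = #((t ×ˢ range k).image fun p => f p.1 + p.2 * b) := (card_image_of_injOn hshift).symm
    _ ≤ _ := card_le_card (image_subset_image (product_subset_product_left hts))

theorem stmt1_general (n : ℕ) (a : Fin n → ℕ) (b k g : ℕ) (hb : 0 < b)
    (hgcd : ∀ i, Nat.gcd (a i) b ≤ g) :
    (k : ℝ) * min ((b : ℝ) / g) n ≤
      ((((Finset.univ : Finset (Finset (Fin n))) ×ˢ Finset.range (k + 1)).image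
        (fun p => (∑ i ∈ p.1, a i) + p.2 * b)).card : ℝ) := by
  set A := subsetSums (fun i => (a i : ZMod b)) univ
  have hA : min ⌈(b : ℝ) / g⌉₊ (n + 1) ≤ #A := by
    simpa using min_card_add_one_le_card_subsetSums (fun i => (a i : ZMod b)) univ
      fun i _ => Nat.ceil_le.mpr (div_le_addOrderOf_natCast hb.ne' (hgcd i))
  have hS := card_image_natCast_mul_le_card_image_add_mul (fun I => ∑ i ∈ I, a i) univ hb.ne' (k + 1)
  have hAS : #A = #(univ.image fun I : Finset (Fin n) => ((∑ i ∈ I, a i : ℕ) : ZMod b)) := by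
    simp [A, subsetSums]
  have hmin : min ((b : ℝ) / g) n ≤ #A := by
    calc min ((b : ℝ) / g) n ≤ min (⌈(b : ℝ) / g⌉₊ : ℝ) ((n + 1 : ℕ) : ℝ) :=
          min_le_min (Nat.le_ceil _) (by push_cast; linarith)
      _ ≤ #A := by exact_mod_cast hA
  calc (k : ℝ) * min ((b : ℝ) / g) n ≤ #A * (k + 1) := by
        rw [mul_comm]; gcongr; linarith
    _ ≤ _ := by rw [hAS]; exact_mod_cast hS

/-- `|S(a, k∘b)| ≥ k · min (b/g) n`. -/
theorem stmt1 (n : ℕ) (a : Fin n → ℕ) (ha : ∀ i, 0 < a i) (b k g : ℕ) (hb : 0 < b)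
    (hk : 0 < k) (hg : 0 < g) (hgcd : ∀ i, Nat.gcd (a i) b ≤ g) :
    (k : ℝ) * min ((b : ℝ) / g) n ≤
      ((((Finset.univ : Finset (Finset (Fin n))) ×ˢ Finset.range (k + 1)).image
        (fun p => (∑ i ∈ p.1, a i) + p.2 * b)).card : ℝ) :=
  stmt1_general n a b k g hb hgcd
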